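/- Let G₀ be finite and suppose there is a right Følner net (F_i)_{i∈I} in the cell space. Then the cell space is right amenable, i.e. there exists a finitely additive probability measure μ on 𝒫(M) with μ(A ⇀ 𝔤) = μ(A) for every 𝔤 ∈ G/G₀ and every A ⊆ M on which ⇀𝔤 is injective. -/

import Mathlib

/-!
Let `T = (⇀ 𝔤)` and, for `u ∈ G₀`, `S u = (⇀ u g⁻¹ G₀)` where `g` represents `𝔤`. The map `T` is
not invertible, but every `m` is recovered from `T m` by one of the finitely many `S u`. Counting in
a finite set `F`, the relative sizes of `A` and `T '' A` inside `F` therefore differ by at most the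
Følner defects of `F` for `T` and for the `S u`. Along an ultrafilter refining the tails of the
Følner net all these defects tend to `0`, so the ultralimit of the relative sizes
`|F i ∩ A| / |F i|` is a finitely additive probability measure invariant under `T` on sets where
`T` is injective.
-/

open Filter Set Topology

section Counting

variable {M : Type*}

noncomputable def relDensity (F A : Set M) : ℝ := ((F ∩ A).ncard : ℝ) / F.ncard

noncomputable def folnerDefect (F : Set M) (T : M → M) : ℝ :=
  ((F \ T ⁻¹' F).ncard : ℝ) / F.ncard

lemma relDensity_mem_Icc (F A : Set M) : relDensity F A ∈ Icc (0 : ℝ) 1 := by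
  refine ⟨by unfold relDensity; positivity, ?_⟩
  rcases F.finite_or_infinite with hF | hF
  · exact div_le_one_of_le₀ (by exact_mod_cast ncard_le_ncard inter_subset_left hF)
      (Nat.cast_nonneg _)
  · simp [relDensity, hF.ncard]

lemma relDensity_univ {F : Set M} (hF : F.Finite) (hne : F.Nonempty) : relDensity F univ = 1 := by
  rw [relDensity, inter_univ, div_self]
  exact_mod_cast ((ncard_pos hF).2 hne).ne'

lemma relDensity_union {F A B : Set M} (hF : F.Finite) (hAB : Disjoint A B) :
    relDensity F (A ∪ B) = relDensity F A + relDensity F B := by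
  rw [relDensity, inter_union_distrib_left, ncard_union_eq
    (hAB.mono inter_subset_right inter_subset_right) (hF.inter_of_left _) (hF.inter_of_left _),
    Nat.cast_add, add_div, relDensity, relDensity]

lemma ncard_inter_le_ncard_inter_image_add {F A : Set M} (hF : F.Finite) {T : M → M}
    (hinj : InjOn T A) : (F ∩ A).ncard ≤ (F ∩ T '' A).ncard + (F \ T ⁻¹' F).ncard := by
  have hsplit : F ∩ A ⊆ (F ∩ A ∩ T ⁻¹' F) ∪ (F \ T ⁻¹' F) := fun m hm => by
    by_cases hmT : T m ∈ F
    exacts [Or.inl ⟨hm, hmT⟩, Or.inr ⟨hm.1, hmT⟩]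
  have himage : (F ∩ A ∩ T ⁻¹' F).ncard ≤ (F ∩ T '' A).ncard := by
    rw [← (hinj.mono fun m hm => hm.1.2).ncard_image]
    refine ncard_le_ncard ?_ (hF.inter_of_left _)
    rintro _ ⟨m, ⟨⟨-, hmA⟩, hmT⟩, rfl⟩
    exact ⟨hmT, m, hmA, rfl⟩
  calc (F ∩ A).ncard ≤ (F ∩ A ∩ T ⁻¹' F).ncard + (F \ T ⁻¹' F).ncard :=
        (ncard_le_ncard hsplit ((hF.inter_of_left _).inter_of_left _ |>.union hF.sdiff)).trans
          (ncard_union_le _ _)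
    _ ≤ (F ∩ T '' A).ncard + (F \ T ⁻¹' F).ncard := Nat.add_le_add_right himage _

/-- A point `T m ∈ F` with `m ∉ F` is witnessed in the defect of the `S u` that sends it back to
`m`. -/
lemma ncard_inter_image_le_ncard_inter_add {ι : Type*} [Fintype ι] {F : Set M} (hF : F.Finite)
    {T : M → M} {S : ι → M → M} (hS : ∀ m, ∃ u, S u (T m) = m) (A : Set M) :
    (F ∩ T '' A).ncard ≤ (F ∩ A).ncard + ∑ u, (F \ S u ⁻¹' F).ncard := by
  have hcover : F ∩ T '' A ⊆ T '' (F ∩ A) ∪ ⋃ u, F \ S u ⁻¹' F := by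
    rintro _ ⟨hTm, m, hmA, rfl⟩
    by_cases hm : m ∈ F
    · exact Or.inl ⟨m, ⟨hm, hmA⟩, rfl⟩
    · obtain ⟨u, hu⟩ := hS m
      exact Or.inr (mem_iUnion.2 ⟨u, hTm, by simpa [hu] using hm⟩)
  calc (F ∩ T '' A).ncard ≤ (T '' (F ∩ A)).ncard + (⋃ u, F \ S u ⁻¹' F).ncard :=
        (ncard_le_ncard hcover (((hF.inter_of_left _).image T).union
          (finite_iUnion fun _ => hF.sdiff))).trans (ncard_union_le _ _)
    _ ≤ (F ∩ A).ncard + ∑ u, (F \ S u ⁻¹' F).ncard :=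
        Nat.add_le_add (ncard_image_le (hF.inter_of_left _)) (ncard_iUnion_le_of_fintype _)

lemma abs_relDensity_image_sub_le {ι : Type*} [Fintype ι] {F A : Set M} (hF : F.Finite)
    {T : M → M} {S : ι → M → M} (hS : ∀ m, ∃ u, S u (T m) = m) (hinj : InjOn T A) :
    |relDensity F (T '' A) - relDensity F A| ≤
      folnerDefect F T + ∑ u, folnerDefect F (S u) := by
  have hle : ((F ∩ A).ncard : ℝ) ≤ (F ∩ T '' A).ncard + (F \ T ⁻¹' F).ncard := by
    exact_mod_cast ncard_inter_le_ncard_inter_image_add hF hinj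
  have hge : ((F ∩ T '' A).ncard : ℝ) ≤ (F ∩ A).ncard + ∑ u, ((F \ S u ⁻¹' F).ncard : ℝ) := by
    exact_mod_cast ncard_inter_image_le_ncard_inter_add hF hS A
  have hS0 : 0 ≤ ∑ u, ((F \ S u ⁻¹' F).ncard : ℝ) := by positivity
  simp only [relDensity, folnerDefect, ← Finset.sum_div, ← add_div, ← sub_div, abs_div,
    Nat.abs_cast]
  gcongr
  exact abs_le.2 ⟨by linarith [(F \ T ⁻¹' F).ncard.cast_nonneg (α := ℝ)], by linarith⟩

end Counting

section Ultralimit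

variable {I M : Type*} (U : Ultrafilter I) (F : I → Set M)

noncomputable def ultraDensity (A : Set M) : ℝ :=
  limUnder (U : Filter I) fun i => relDensity (F i) A

lemma tendsto_ultraDensity (A : Set M) :
    Tendsto (fun i => relDensity (F i) A) U (𝓝 (ultraDensity U F A)) := by
  refine tendsto_nhds_limUnder ?_
  obtain ⟨x, -, hx⟩ := isCompact_Icc.ultrafilter_le_nhds (U.map fun i => relDensity (F i) A)
    (le_principal_iff.2 (Ultrafilter.mem_map.2 (univ_mem' fun i => relDensity_mem_Icc (F i) A)))
  exact ⟨x, hx⟩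

lemma ultraDensity_mem_Icc (A : Set M) : ultraDensity U F A ∈ Icc (0 : ℝ) 1 :=
  isClosed_Icc.mem_of_tendsto (tendsto_ultraDensity U F A)
    (Eventually.of_forall fun i => relDensity_mem_Icc (F i) A)

lemma ultraDensity_univ (hF : ∀ i, (F i).Finite) (hne : ∀ i, (F i).Nonempty) :
    ultraDensity U F univ = 1 :=
  tendsto_nhds_unique (tendsto_ultraDensity U F univ)
    (tendsto_const_nhds.congr fun i => (relDensity_univ (hF i) (hne i)).symm)

lemma ultraDensity_union (hF : ∀ i, (F i).Finite) {A B : Set M} (hAB : Disjoint A B) :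
    ultraDensity U F (A ∪ B) = ultraDensity U F A + ultraDensity U F B :=
  tendsto_nhds_unique (tendsto_ultraDensity U F (A ∪ B))
    (((tendsto_ultraDensity U F A).add (tendsto_ultraDensity U F B)).congr fun i =>
      (relDensity_union (hF i) hAB).symm)

lemma ultraDensity_image {ι : Type*} [Fintype ι] (hF : ∀ i, (F i).Finite) {T : M → M}
    {S : ι → M → M} (hS : ∀ m, ∃ u, S u (T m) = m)
    (hT0 : Tendsto (fun i => folnerDefect (F i) T) U (𝓝 0))
    (hS0 : ∀ u, Tendsto (fun i => folnerDefect (F i) (S u)) U (𝓝 0))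
    {A : Set M} (hinj : InjOn T A) : ultraDensity U F (T '' A) = ultraDensity U F A := by
  have hbound : Tendsto (fun i => folnerDefect (F i) T + ∑ u, folnerDefect (F i) (S u)) U
      (𝓝 0) := by
    simpa using hT0.add (tendsto_finsetSum Finset.univ fun u _ => hS0 u)
  have hdiff : Tendsto (fun i => relDensity (F i) (T '' A) - relDensity (F i) A) U (𝓝 0) :=
    squeeze_zero_norm (fun i => abs_relDensity_image_sub_le (hF i) hS hinj) hbound
  refine tendsto_nhds_unique (tendsto_ultraDensity U F (T '' A)) ?_
  simpa using ((tendsto_ultraDensity U F A).add hdiff).congr fun i => add_sub_cancel _ _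

end Ultralimit

section TailFilter

variable {I : Type*} (r : I → I → Prop)

def tailFilter : Filter I := ⨅ i₀, 𝓟 {i | r i₀ i}

lemma setOf_mem_tailFilter (i₀ : I) : {i | r i₀ i} ∈ tailFilter r :=
  mem_iInf_of_mem i₀ (mem_principal_self _)

lemma tailFilter_neBot [Nonempty I] (hrefl : ∀ i, r i i) (htr : ∀ ⦃i j k⦄, r i j → r j k → r i k)
    (hdir : ∀ i j : I, ∃ k : I, r i k ∧ r j k) : (tailFilter r).NeBot := by
  refine iInf_neBot_of_directed' (fun i j => ?_) fun i₀ => principal_neBot_iff.2 ⟨i₀, hrefl i₀⟩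
  obtain ⟨k, hik, hjk⟩ := hdir i j
  exact ⟨k, principal_mono.2 fun x hx => htr hik hx, principal_mono.2 fun x hx => htr hjk hx⟩

lemma tendsto_tailFilter_nhds_zero {f : I → ℝ} (hf0 : ∀ i, 0 ≤ f i)
    (hf : ∀ ε > (0 : ℝ), ∃ i₀ : I, ∀ i : I, r i₀ i → f i < ε) :
    Tendsto f (tailFilter r) (𝓝 0) := by
  refine tendsto_order.2 ⟨fun a ha => Eventually.of_forall fun i => ha.trans_le (hf0 i),
    fun a ha => ?_⟩
  obtain ⟨i₀, hi₀⟩ := hf a ha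
  exact mem_of_superset (setOf_mem_tailFilter r i₀) hi₀

end TailFilter

lemma exists_stabilizer_semiaction_leftInverse {G M : Type*} [Group G] [MulAction G M] {m₀ : M}
    {gg : M → G} (hgg : ∀ m, gg m • m₀ = m) {ρ : M → G ⧸ MulAction.stabilizer G m₀ → M}
    (hρ : ∀ (m : M) (g : G), ρ m (g : G ⧸ MulAction.stabilizer G m₀) = (gg m * g) • m₀)
    (𝔤 : G ⧸ MulAction.stabilizer G m₀) (m : M) :
    ∃ u : MulAction.stabilizer G m₀, ρ (ρ m 𝔤) ((u : G) * 𝔤.out⁻¹ : G) = m := by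
  set g := 𝔤.out
  have hT : ρ m 𝔤 = (gg m * g) • m₀ := by rw [← hρ, QuotientGroup.out_eq']
  have hu : (gg (ρ m 𝔤))⁻¹ * gg m * g ∈ MulAction.stabilizer G m₀ := by
    rw [MulAction.mem_stabilizer_iff, mul_assoc, mul_smul, ← hT, inv_smul_eq_iff, hgg]
  refine ⟨⟨_, hu⟩, ?_⟩
  rw [hρ]
  simp only [mul_assoc, mul_inv_cancel_left, mul_inv_cancel, mul_one, hgg]

theorem stmt14_general {G M : Type*} [Group G] [MulAction G M]
    (m₀ : M) (gg : M → G) (hgg : ∀ m, gg m • m₀ = m)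
    (ρ : M → G ⧸ MulAction.stabilizer G m₀ → M)
    (hρ : ∀ (m : M) (g : G), ρ m (g : G ⧸ MulAction.stabilizer G m₀) = (gg m * g) • m₀)
    [Finite (MulAction.stabilizer G m₀)]
    {I : Type*} (r : I → I → Prop) (hrefl : Reflexive r) (htr : Transitive r)
    (hdir : ∀ i j : I, ∃ k : I, r i k ∧ r j k) [Nonempty I]
    (F : I → Set M) (hFne : ∀ i, (F i).Nonempty) (hFfin : ∀ i, (F i).Finite)
    (hFol : ∀ 𝔤 : G ⧸ MulAction.stabilizer G m₀, ∀ ε > (0 : ℝ), ∃ i₀ : I, ∀ i : I, r i₀ i →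
      ((F i \ (fun m => ρ m 𝔤) ⁻¹' (F i)).ncard : ℝ) / (F i).ncard < ε) :
    ∃ μ : Set M → ℝ,
      (∀ A : Set M, 0 ≤ μ A ∧ μ A ≤ 1) ∧ μ Set.univ = 1 ∧
      (∀ A B : Set M, Disjoint A B → μ (A ∪ B) = μ A + μ B) ∧
      (∀ (𝔤 : G ⧸ MulAction.stabilizer G m₀) (A : Set M),
        Set.InjOn (fun m => ρ m 𝔤) A → μ ((fun a => ρ a 𝔤) '' A) = μ A) := by
  have := Fintype.ofFinite (MulAction.stabilizer G m₀)
  have := tailFilter_neBot r hrefl htr hdir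
  obtain ⟨U, hU⟩ := Ultrafilter.exists_le (tailFilter r)
  have hdefect (𝔤 : G ⧸ MulAction.stabilizer G m₀) :
      Tendsto (fun i => folnerDefect (F i) fun m => ρ m 𝔤) U (𝓝 0) :=
    (tendsto_tailFilter_nhds_zero r (fun i => by positivity) (hFol 𝔤)).mono_left hU
  exact ⟨ultraDensity U F, ultraDensity_mem_Icc U F, ultraDensity_univ U F hFfin hFne,
    fun A B => ultraDensity_union U F hFfin, fun 𝔤 A hinj =>
      ultraDensity_image U F hFfin (exists_stabilizer_semiaction_leftInverse hgg hρ 𝔤)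
        (hdefect 𝔤) (fun u => hdefect _) hinj⟩

theorem stmt14 {G M : Type*} [Group G] [MulAction G M]
    (htrans : ∀ m mp : M, ∃ g : G, g • m = mp)
    (m₀ : M) (gg : M → G) (hgg : ∀ m, gg m • m₀ = m)
    (ρ : M → G ⧸ MulAction.stabilizer G m₀ → M)
    (hρ : ∀ (m : M) (g : G), ρ m (g : G ⧸ MulAction.stabilizer G m₀) = (gg m * g) • m₀)
    [Finite (MulAction.stabilizer G m₀)]
    {I : Type*} (r : I → I → Prop) (hrefl : Reflexive r) (htr : Transitive r)
    (hdir : ∀ i j : I, ∃ k : I, r i k ∧ r j k) [Nonempty I]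
    (F : I → Set M) (hFne : ∀ i, (F i).Nonempty) (hFfin : ∀ i, (F i).Finite)
    (hFol : ∀ 𝔤 : G ⧸ MulAction.stabilizer G m₀, ∀ ε > (0 : ℝ), ∃ i₀ : I, ∀ i : I, r i₀ i →
      ((F i \ (fun m => ρ m 𝔤) ⁻¹' (F i)).ncard : ℝ) / (F i).ncard < ε) :
    ∃ μ : Set M → ℝ,
      (∀ A : Set M, 0 ≤ μ A ∧ μ A ≤ 1) ∧ μ Set.univ = 1 ∧
      (∀ A B : Set M, Disjoint A B → μ (A ∪ B) = μ A + μ B) ∧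
      (∀ (𝔤 : G ⧸ MulAction.stabilizer G m₀) (A : Set M),
        Set.InjOn (fun m => ρ m 𝔤) A → μ ((fun a => ρ a 𝔤) '' A) = μ A) :=
  stmt14_general m₀ gg hgg ρ hρ r hrefl htr hdir F hFne hFfin hFol
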